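/- For f ∈ ℝ³ with 0 < |f| ≤ 1, the Eddington tensor D(f) = ((1-χ(|f|))/2) I + ((3χ(|f|)-1)/2) (f⊗f)/|f|² is symmetric positive semidefinite, with eigenvalues (1-χ(|f|))/2 (double) and χ(|f|) (simple). -/

import Mathlib

/-!
`D(f)` is `a • 1 + b • f fᵀ` with `a = (1 - χ)/2` and `b = (3χ - 1)/(2|f|²)`. It acts as `a` on
`f^⊥` and as `a + b|f|² = χ` on `f`; and since `1/3 ≤ χ ≤ 1` for `|f| ≤ 1`, both coefficients
are nonnegative, so `D(f)` is a nonnegative combination of the positive semidefinite matrices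
`1` and `f fᵀ`.
-/

open Matrix

namespace Matrix

variable {n : Type*} [Fintype n] [DecidableEq n]

theorem smul_one_add_smul_vecMulVec_self_mulVec {R : Type*} [CommSemiring R] (a b : R)
    (u x : n → R) :
    (a • (1 : Matrix n n R) + b • vecMulVec u u) *ᵥ x = a • x + (b * (u ⬝ᵥ x)) • u := by
  simp [add_mulVec, smul_mulVec, vecMulVec_mulVec, mul_smul]

theorem posSemidef_smul_one_add_smul_vecMulVec_self {a b : ℝ} (ha : 0 ≤ a) (hb : 0 ≤ b)
    (u : n → ℝ) : (a • (1 : Matrix n n ℝ) + b • vecMulVec u u).PosSemidef :=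
  (PosSemidef.one.smul ha).add ((posSemidef_vecMulVec_self_star u).smul hb)

end Matrix

/-- The Eddington factor `χ` of the M₁ closure, as a function of the normalized flux `|f|`. -/
noncomputable def m1EddingtonFactor (s : ℝ) : ℝ :=
  (1 / 3) * (5 - 2 * Real.sqrt (4 - 3 * s ^ 2))

theorem m1EddingtonFactor_mem_Icc {s : ℝ} (hs : s ^ 2 ≤ 1) :
    m1EddingtonFactor s ∈ Set.Icc (1 / 3) 1 := by
  have h_le_two : Real.sqrt (4 - 3 * s ^ 2) ≤ 2 :=
    Real.sqrt_le_iff.mpr ⟨by norm_num, by nlinarith [sq_nonneg s]⟩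
  have h_one_le : 1 ≤ Real.sqrt (4 - 3 * s ^ 2) := Real.one_le_sqrt.mpr (by linarith)
  constructor <;> unfold m1EddingtonFactor <;> linarith

theorem EuclideanSpace.dotProduct_self_eq_norm_sq {n : Type*} [Fintype n]
    (x : EuclideanSpace ℝ n) : (x : n → ℝ) ⬝ᵥ x = ‖x‖ ^ 2 := by
  rw [← real_inner_self_eq_norm_sq, EuclideanSpace.inner_eq_star_dotProduct, star_trivial]

/-- The M₁ Eddington tensor `D(f) = ((1-χ)/2) I + ((3χ-1)/2)(f fᵀ)/|f|²` is symmetric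
positive semidefinite, with eigenvalue `(1-χ)/2` on the plane orthogonal to `f` (double)
and eigenvalue `χ` in the direction `f` (simple). -/
theorem eddington_tensor_posSemidef (f : EuclideanSpace ℝ (Fin 3))
    (hf0 : f ≠ 0) (hf1 : ‖f‖ ≤ 1)
    (χ : ℝ) (hχ : χ = (1 / 3) * (5 - 2 * Real.sqrt (4 - 3 * ‖f‖ ^ 2)))
    (D : Matrix (Fin 3) (Fin 3) ℝ)
    (hD : D = ((1 - χ) / 2) • (1 : Matrix (Fin 3) (Fin 3) ℝ) +
        ((3 * χ - 1) / (2 * ‖f‖ ^ 2)) • Matrix.vecMulVec (f : Fin 3 → ℝ) (f : Fin 3 → ℝ)) :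
    D.PosSemidef ∧
    D.mulVec (f : Fin 3 → ℝ) = χ • (f : Fin 3 → ℝ) ∧
    ∀ x : Fin 3 → ℝ, (f : Fin 3 → ℝ) ⬝ᵥ x = 0 → D.mulVec x = ((1 - χ) / 2) • x := by
  obtain ⟨hχ_lower, hχ_upper⟩ : χ ∈ Set.Icc (1 / 3) 1 :=
    hχ ▸ m1EddingtonFactor_mem_Icc (pow_le_one₀ (norm_nonneg f) hf1)
  have hD_mulVec (x : Fin 3 → ℝ) : D *ᵥ x =
      ((1 - χ) / 2) • x + ((3 * χ - 1) / (2 * ‖f‖ ^ 2) * ((f : Fin 3 → ℝ) ⬝ᵥ x)) • (f : Fin 3 → ℝ) := by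
    rw [hD, smul_one_add_smul_vecMulVec_self_mulVec]
  refine ⟨?_, ?_, fun x hx ↦ by simp [hD_mulVec, hx]⟩
  · rw [hD]
    exact posSemidef_smul_one_add_smul_vecMulVec_self (by linarith)
      (div_nonneg (by linarith) (by positivity)) _
  · have hf : ‖f‖ ≠ 0 := norm_ne_zero_iff.mpr hf0
    rw [hD_mulVec, EuclideanSpace.dotProduct_self_eq_norm_sq, ← add_smul]
    congr 1
    field_simp
    ring
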